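/- Let d ≥ 1 and n ≥ d + 2, and let y : Fin n → EuclideanSpace ℝ (Fin (n - d - 1)) be a sequence of vectors such that (1) Submodule.span ℝ (Set.range y) = ⊤ and (2) ∑ i, y i = 0. Then there exists x : Fin n → EuclideanSpace ℝ (Fin d) with affineSpan ℝ (Set.range x) = ⊤ such that y is a Gale transform of x. -/

import Mathlib

/-!
Since the `y i` span, the evaluation map `α ↦ (⟪α, y i⟫)ᵢ` is injective; since `∑ i, y i = 0`,
its image `V`, of dimension `n - d - 1`, lies in the hyperplane `∑ i, λ i = 0`. The affine
dependences of `x` are the linear dependences of the homogenized points `(x i, 1)`, so we need a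
linear map `λ ↦ (∑ i, λ i • x i, ∑ i, λ i)` from `ℝⁿ` onto `ℝᵈ × ℝ` with kernel exactly `V`. As
`ℝⁿ ⧸ V` has dimension `d + 1` and the sum functional descends to a nonzero functional on it, such
a map is obtained by completing that functional to a linear isomorphism `ℝⁿ ⧸ V ≃ ℝᵈ × ℝ`.
Surjectivity means that the `(x i, 1)` span, i.e. that the `x i` affinely span `ℝᵈ`.
-/

/-- `y` is a Gale transform of `x`: the linear evaluation map
`α ↦ (⟪α, y i⟫)ᵢ` is injective and its range is the space of affine dependences
`K(x) = {λ | ∑ λ i • x i = 0 ∧ ∑ λ i = 0}`. -/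
def IsGaleTransform {n d e : ℕ} (x : Fin n → EuclideanSpace ℝ (Fin d))
    (y : Fin n → EuclideanSpace ℝ (Fin e)) : Prop :=
  Function.Injective
    (fun (α : EuclideanSpace ℝ (Fin e)) (i : Fin n) => (inner ℝ α (y i) : ℝ)) ∧
  Set.range (fun (α : EuclideanSpace ℝ (Fin e)) (i : Fin n) => (inner ℝ α (y i) : ℝ)) =
    {l : Fin n → ℝ | ∑ i, l i • x i = 0 ∧ ∑ i, l i = 0}

open Module

section ExtendFunctional

variable {K Q E F : Type*} [Field K] [AddCommGroup Q] [Module K Q] [FiniteDimensional K Q]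
  [AddCommGroup E] [Module K E] [FiniteDimensional K E]
  [AddCommGroup F] [Module K F] [FiniteDimensional K F]

theorem Module.Dual.exists_bijective_prod {ψ : Dual K Q} (hψ : ψ ≠ 0)
    (hQ : finrank K Q = finrank K F + 1) : ∃ g : Q →ₗ[K] F, Function.Bijective (g.prod ψ) := by
  have hker : finrank K (LinearMap.ker ψ) = finrank K F := by
    have := ψ.finrank_ker_add_one_of_ne_zero hψ
    omega
  obtain ⟨p, hp⟩ := (LinearMap.ker ψ).subtype.exists_leftInverse_of_injective
    (LinearMap.ker ψ).ker_subtype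
  refine ⟨(LinearEquiv.ofFinrankEq _ _ hker).toLinearMap ∘ₗ p, ?_⟩
  have hinj :
      Function.Injective (((LinearEquiv.ofFinrankEq _ _ hker).toLinearMap ∘ₗ p).prod ψ) := by
    rw [← LinearMap.ker_eq_bot, LinearMap.ker_prod, Submodule.eq_bot_iff]
    intro q hq
    obtain ⟨hpq, hψq⟩ := Submodule.mem_inf.1 hq
    have hpq' : p q = ⟨q, hψq⟩ := LinearMap.congr_fun hp ⟨q, hψq⟩
    rw [LinearMap.mem_ker, LinearMap.comp_apply, LinearEquiv.coe_coe,
      LinearEquiv.map_eq_zero_iff, hpq'] at hpq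
    exact congrArg Subtype.val hpq
  refine ⟨hinj, ?_⟩
  rwa [← LinearMap.injective_iff_surjective_of_finrank_eq_finrank]
  rw [finrank_prod, finrank_self, hQ]

theorem Module.Dual.exists_ker_prod_eq_and_range_eq_top {V : Submodule K E} {φ : Dual K E}
    (hφ : φ ≠ 0) (hVφ : V ≤ LinearMap.ker φ) (hE : finrank K V + finrank K F + 1 = finrank K E) :
    ∃ f : E →ₗ[K] F, LinearMap.ker (f.prod φ) = V ∧ LinearMap.range (f.prod φ) = ⊤ := by
  set ψ := V.liftQ φ hVφ
  have hφψ : ψ ∘ₗ V.mkQ = φ := V.liftQ_mkQ φ hVφ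
  have hψ : ψ ≠ 0 := by
    intro h
    rw [h, LinearMap.zero_comp] at hφψ
    exact hφ hφψ.symm
  obtain ⟨g, hg⟩ := Module.Dual.exists_bijective_prod (F := F) hψ
    (by have := V.finrank_quotient_add_finrank; omega)
  refine ⟨g ∘ₗ V.mkQ, ?_, ?_⟩
  all_goals rw [← hφψ, ← LinearMap.prod_comp]
  · rw [LinearMap.ker_comp, LinearMap.ker_eq_bot_of_injective hg.1, Submodule.comap_bot,
      Submodule.ker_mkQ]
  · rw [LinearMap.range_comp_of_range_eq_top _ V.range_mkQ,
      LinearMap.range_eq_top_of_surjective _ hg.2]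

end ExtendFunctional

section Homogenization

variable {ι E : Type*}

def homogenize (K : Type*) [One K] (x : ι → E) : ι → E × K := fun i => (x i, 1)

variable {K : Type*} [Fintype ι]

theorem mem_ker_linearCombination_homogenize_iff [Semiring K] [AddCommMonoid E] [Module K E]
    (x : ι → E) (l : ι → K) :
    l ∈ LinearMap.ker (Fintype.linearCombination K (homogenize K x)) ↔
      ∑ i, l i • x i = 0 ∧ ∑ i, l i = 0 := by
  simp [homogenize, Fintype.linearCombination_apply, Prod.ext_iff, Prod.fst_sum, Prod.snd_sum]

theorem affineSpan_eq_top_of_span_homogenize_eq_top [Ring K] [Nontrivial K] [AddCommGroup E]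
    [Module K E] {x : ι → E} (hx : Submodule.span K (Set.range (homogenize K x)) = ⊤) :
    affineSpan K (Set.range x) = ⊤ := by
  refine eq_top_iff.2 fun p _ => ?_
  obtain ⟨l, hl⟩ :
      (p, (1 : K)) ∈ LinearMap.range (Fintype.linearCombination K (homogenize K x)) := by
    rw [Fintype.range_linearCombination, hx]; trivial
  simp only [homogenize, Fintype.linearCombination_apply, Prod.ext_iff, Prod.fst_sum,
    Prod.snd_sum, Prod.smul_fst, Prod.smul_snd, smul_eq_mul, mul_one] at hl
  rw [← hl.1, ← Finset.univ.affineCombination_eq_linear_combination x l hl.2]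
  exact affineCombination_mem_affineSpan hl.2 x

theorem exists_ker_linearCombination_homogenize_eq [Field K] [AddCommGroup E] [Module K E]
    [FiniteDimensional K E] {V : Submodule K (ι → K)}
    (hV : V ≤ LinearMap.ker (Fintype.linearCombination K fun _ : ι => (1 : K)))
    (hdim : finrank K V + finrank K E + 1 = Fintype.card ι) :
    ∃ x : ι → E, LinearMap.ker (Fintype.linearCombination K (homogenize K x)) = V ∧
      Submodule.span K (Set.range (homogenize K x)) = ⊤ := by
  classical
  obtain ⟨i₀⟩ : Nonempty ι := Fintype.card_pos_iff.1 (by omega)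
  have hφ : Fintype.linearCombination K (fun _ : ι => (1 : K)) ≠ 0 := fun h => by
    simpa using LinearMap.congr_fun h (Pi.single i₀ 1)
  obtain ⟨f, hker, hrange⟩ :=
    Module.Dual.exists_ker_prod_eq_and_range_eq_top (F := E) hφ hV (by rwa [finrank_pi])
  have hf : f.prod (Fintype.linearCombination K fun _ => 1) =
      Fintype.linearCombination K (homogenize K fun i => f (Pi.single i 1)) := by
    refine LinearMap.pi_ext fun i c => ?_
    simp [homogenize, Fintype.linearCombination_apply_single, ← map_smul, ← Pi.single_smul]
  refine ⟨fun i => f (Pi.single i 1), hf ▸ hker, ?_⟩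
  rw [← Fintype.range_linearCombination, ← hf, hrange]

end Homogenization

section InnerEval

variable {ι E : Type*} [NormedAddCommGroup E] [InnerProductSpace ℝ E]

def innerEval (y : ι → E) : E →ₗ[ℝ] ι → ℝ where
  toFun α i := inner ℝ α (y i)
  map_add' α β := funext fun i => inner_add_left α β (y i)
  map_smul' c α := funext fun i => real_inner_smul_left α (y i) c

theorem innerEval_injective {y : ι → E} (hy : Submodule.span ℝ (Set.range y) = ⊤) :
    Function.Injective (innerEval y) := by
  rw [← LinearMap.ker_eq_bot, Submodule.eq_bot_iff]
  intro α hα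
  have hle : Submodule.span ℝ (Set.range y) ≤ LinearMap.ker (innerₗ E α) := by
    rw [Submodule.span_le]
    rintro _ ⟨i, rfl⟩
    exact congrFun hα i
  rw [hy] at hle
  exact inner_self_eq_zero.1 (hle (Submodule.mem_top (x := α)))

theorem range_innerEval_le_ker_sum [Fintype ι] {y : ι → E} (hy : ∑ i, y i = 0) :
    LinearMap.range (innerEval y) ≤
      LinearMap.ker (Fintype.linearCombination ℝ fun _ : ι => (1 : ℝ)) := by
  rintro _ ⟨α, rfl⟩
  simp [Fintype.linearCombination_apply, innerEval, ← inner_sum, hy]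

end InnerEval

theorem stmt9_general {d n : ℕ} (hn : d + 2 ≤ n)
    (y : Fin n → EuclideanSpace ℝ (Fin (n - d - 1)))
    (hspan : Submodule.span ℝ (Set.range y) = ⊤)
    (hsum : ∑ i, y i = 0) :
    ∃ x : Fin n → EuclideanSpace ℝ (Fin d),
      affineSpan ℝ (Set.range x) = ⊤ ∧ IsGaleTransform x y := by
  have hinj := innerEval_injective hspan
  obtain ⟨x, hker, hlift⟩ :=
    exists_ker_linearCombination_homogenize_eq (E := EuclideanSpace ℝ (Fin d))
      (range_innerEval_le_ker_sum hsum) (by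
        rw [LinearMap.finrank_range_of_inj hinj, finrank_euclideanSpace_fin,
          finrank_euclideanSpace_fin, Fintype.card_fin]
        omega)
  refine ⟨x, affineSpan_eq_top_of_span_homogenize_eq_top hlift, hinj, ?_⟩
  ext l
  rw [Set.mem_ofPred_eq, ← mem_ker_linearCombination_homogenize_iff, hker]
  rfl

theorem stmt9 {d n : ℕ} (hd : 1 ≤ d) (hn : d + 2 ≤ n)
    (y : Fin n → EuclideanSpace ℝ (Fin (n - d - 1)))
    (hspan : Submodule.span ℝ (Set.range y) = ⊤)
    (hsum : ∑ i, y i = 0) :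
    ∃ x : Fin n → EuclideanSpace ℝ (Fin d),
      affineSpan ℝ (Set.range x) = ⊤ ∧ IsGaleTransform x y :=
  stmt9_general hn y hspan hsum
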